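/- arXiv:2406.11814 — 6 statements merged into one kernel-verified Lean document; each statement's English description precedes it below -/
import Mathlib

section
/- Let X be a measurable space, let E := EuclideanSpace ℝ (Fin d) (with its Borel σ-algebra), and let a group G act on X measurably and on E in such a way that for each g ∈ G the map y ↦ g • y is (the underlying map of) a continuous affine map E → E over ℝ. Let k be a Markov kernel from X to E that is G-equivariant (for all g, x, k(g • x) equals the pushforward of k(x) under y ↦ g • y), and assume the identity function y ↦ y is Bochner integrable with respect to k(x) for every x. Then the barycenter map b : X → E defined by b(x) := ∫ y ∂k(x) is G-equivariant: b(g • x) = g • b(x) for all g, x. -/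
/-!
A continuous affine map is a continuous linear map plus a constant. The Bochner integral commutes
with the linear part, and against a probability measure it returns the constant unchanged, so
barycenters commute with continuous affine maps. Equivariance of `k` identifies `k (g • x)` with
the pushforward of `k x` under such a map.
-/

open MeasureTheory

theorem ContinuousAffineMap.integral_comp_comm {α 𝕜 E F : Type*} [MeasurableSpace α]
    {μ : Measure α} [IsProbabilityMeasure μ] [RCLike 𝕜]
    [NormedAddCommGroup E] [NormedSpace 𝕜 E] [NormedSpace ℝ E] [CompleteSpace E]
    [NormedAddCommGroup F] [NormedSpace 𝕜 F] [NormedSpace ℝ F] [CompleteSpace F]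
    (f : E →ᴬ[𝕜] F) {φ : α → E} (hφ : Integrable φ μ) :
    ∫ a, f (φ a) ∂μ = f (∫ a, φ a ∂μ) := by
  rw [f.decomp]
  simp only [Pi.add_apply, Function.const_apply]
  rw [integral_add (f.contLinear.integrable_comp hφ) (integrable_const _), integral_const,
    probReal_univ, one_smul, f.contLinear.integral_comp_comm hφ]

theorem ContinuousAffineMap.integral_id_map {E F : Type*}
    [NormedAddCommGroup E] [NormedSpace ℝ E] [CompleteSpace E]
    [MeasurableSpace E] [OpensMeasurableSpace E]
    [NormedAddCommGroup F] [NormedSpace ℝ F] [CompleteSpace F]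
    [MeasurableSpace F] [BorelSpace F] [SecondCountableTopology F]
    {μ : Measure E} [IsProbabilityMeasure μ] (f : E →ᴬ[ℝ] F) (hμ : Integrable (fun y => y) μ) :
    ∫ y, y ∂(μ.map f) = f (∫ y, y ∂μ) :=
  (integral_map f.continuous.aemeasurable aestronglyMeasurable_id).trans
    (f.integral_comp_comm hμ)

theorem barycenter_equivariant_general
    {X G : Type*} {d : ℕ} [MeasurableSpace X]
    [Group G] [MulAction G X] [MulAction G (EuclideanSpace ℝ (Fin d))]
    (haff : ∀ g : G, ∃ A : EuclideanSpace ℝ (Fin d) →ᵃ[ℝ] EuclideanSpace ℝ (Fin d),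
      Continuous A ∧ ∀ y : EuclideanSpace ℝ (Fin d), g • y = A y)
    (k : ProbabilityTheory.Kernel X (EuclideanSpace ℝ (Fin d)))
    [ProbabilityTheory.IsMarkovKernel k]
    (hk : ∀ (g : G) (x : X),
      k (g • x) = (k x).map (fun y : EuclideanSpace ℝ (Fin d) => g • y))
    (hint : ∀ x : X, Integrable (fun y : EuclideanSpace ℝ (Fin d) => y) (k x)) :
    ∀ (g : G) (x : X),
      (∫ y, y ∂(k (g • x))) = g • (∫ y, y ∂(k x)) := by
  intro g x
  obtain ⟨A, hA_cont, hA⟩ := haff g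
  let f : EuclideanSpace ℝ (Fin d) →ᴬ[ℝ] EuclideanSpace ℝ (Fin d) := ⟨A, hA_cont⟩
  have hg : (fun y => g • y) = f := funext hA
  rw [hk, hg, hA]
  exact f.integral_id_map (hint x)

/-- The expectation (barycenter) operator preserves equivariance with respect to
affine group actions: if `k` is a `G`-equivariant Markov kernel from `X` to
`E = EuclideanSpace ℝ (Fin d)` and each `y ↦ g • y` is a continuous affine map,
then `x ↦ ∫ y ∂k(x)` is `G`-equivariant. -/
theorem barycenter_equivariant
    {X G : Type*} {d : ℕ} [MeasurableSpace X]
    [Group G] [MulAction G X] [MulAction G (EuclideanSpace ℝ (Fin d))]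
    (hmX : ∀ g : G, Measurable fun x : X => g • x)
    (haff : ∀ g : G, ∃ A : EuclideanSpace ℝ (Fin d) →ᵃ[ℝ] EuclideanSpace ℝ (Fin d),
      Continuous A ∧ ∀ y : EuclideanSpace ℝ (Fin d), g • y = A y)
    (k : ProbabilityTheory.Kernel X (EuclideanSpace ℝ (Fin d)))
    [ProbabilityTheory.IsMarkovKernel k]
    (hk : ∀ (g : G) (x : X),
      k (g • x) = (k x).map (fun y : EuclideanSpace ℝ (Fin d) => g • y))
    (hint : ∀ x : X, Integrable (fun y : EuclideanSpace ℝ (Fin d) => y) (k x)) :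
    ∀ (g : G) (x : X),
      (∫ y, y ∂(k (g • x))) = g • (∫ y, y ∂(k x)) :=
  barycenter_equivariant_general haff k hk hint
end

section
/- Let G and H be groups, φ : H →* G a group homomorphism, let G act on sets X and Y, and let k : X → Y satisfy k(φ(h) • x) = φ(h) • k(x) for all h ∈ H and x ∈ X. Let k♯ : (G ⧸ range φ) × X → Y be the unique function with k♯(⟦g⟧, x) = g • k(g⁻¹ • x) for all g, x. Then k♯ is G-equivariant for the diagonal action: k♯(g' • c, g' • x) = g' • k♯(c, x) for all g' ∈ G, c ∈ G ⧸ range φ, x ∈ X, where G acts on G ⧸ range φ by left translation g' • ⟦g⟧ = ⟦g' g⟧. -/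
/-- The transpose `k♯` of an `H`-equivariant map `k` (along `φ : H →* G`) is
`G`-equivariant for the diagonal action, where `G` acts on `G ⧸ range φ` by
left translation. -/
theorem transpose_equivariant
    {G H X Y : Type*} [Group G] [Group H] (φ : H →* G)
    [MulAction G X] [MulAction G Y] (k : X → Y)
    (hk : ∀ (h : H) (x : X), k (φ h • x) = φ h • k x)
    (ksharp : (G ⧸ φ.range) × X → Y)
    (hks : ∀ (g : G) (x : X), ksharp (QuotientGroup.mk g, x) = g • k (g⁻¹ • x)) :
    ∀ (g' : G) (c : G ⧸ φ.range) (x : X),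
      ksharp (g' • c, g' • x) = g' • ksharp (c, x) := by
  intro g' c x
  induction c using QuotientGroup.induction_on with
  | H g =>
    have : (g' • (QuotientGroup.mk g : G ⧸ φ.range)) = QuotientGroup.mk (g' * g) := rfl
    rw [this, hks, hks]; simp [mul_smul]
end

section
/- Let G and H be groups, φ : H →* G a group homomorphism, and let G act on sets X and Y. The assignment k ↦ k♯, where k♯ is the unique function with k♯(⟦g⟧, x) = g • k(g⁻¹ • x), is a bijection from the set of maps k : X → Y satisfying k(φ(h) • x) = φ(h) • k(x) for all h, x, onto the set of maps m : (G ⧸ range φ) × X → Y satisfying m(g • c, g • x) = g • m(c, x) for all g ∈ G, c ∈ G ⧸ range φ, x ∈ X. Its inverse sends m to the map x ↦ m(⟦1⟧, x). -/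
section Aux

variable {G H X Y : Type*} [Group G] [Group H] (φ : H →* G)
  [MulAction G X] [MulAction G Y]

def transposeFun (k : {k : X → Y // ∀ (h : H) (x : X), k (φ h • x) = φ h • k x}) :
    (G ⧸ φ.range) × X → Y := fun p =>
  Quotient.liftOn' p.1 (fun g => g • k.1 (g⁻¹ • p.2)) (by
    intro a b hab
    obtain ⟨h, hh⟩ := QuotientGroup.leftRel_apply.mp hab
    have hb : b = a * φ h := by rw [hh]; group
    subst hb
    have := k.2 h⁻¹ ((a * φ h)⁻¹ • p.2)
    simp only [map_inv] at this
    calc a • k.1 (a⁻¹ • p.2)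
        = a • k.1 ((φ h) • (φ h)⁻¹ • a⁻¹ • p.2) := by simp [smul_smul]
      _ = (a * φ h) • k.1 ((a * φ h)⁻¹ • p.2) := by
          rw [k.2 h]; simp [smul_smul, mul_assoc]
  )

theorem transposeFun_mk (k : {k : X → Y // ∀ (h : H) (x : X), k (φ h • x) = φ h • k x})
    (g : G) (x : X) :
    transposeFun φ k (QuotientGroup.mk g, x) = g • k.1 (g⁻¹ • x) := rfl

theorem transposeFun_equivariant
    (k : {k : X → Y // ∀ (h : H) (x : X), k (φ h • x) = φ h • k x})
    (g : G) (c : G ⧸ φ.range) (x : X) :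
    transposeFun φ k (g • c, g • x) = g • transposeFun φ k (c, x) := by
  induction c using QuotientGroup.induction_on with
  | H a =>
    have : g • (QuotientGroup.mk a : G ⧸ φ.range) = QuotientGroup.mk (g * a) := rfl
    rw [this, transposeFun_mk, transposeFun_mk, smul_smul, mul_smul]
    congr 2
    simp [smul_smul, mul_assoc]

end Aux

/-- The assignment `k ↦ k♯`, with `k♯(⟦g⟧, x) = g • k (g⁻¹ • x)`, is a bijection from
the set of `H`-equivariant maps `X → Y` (via `φ : H →* G`) onto the set of
`G`-equivariant maps `(G ⧸ range φ) × X → Y`, with inverse `m ↦ (x ↦ m (⟦1⟧, x))`. -/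
theorem transpose_bijection
    {G H X Y : Type*} [Group G] [Group H] (φ : H →* G)
    [MulAction G X] [MulAction G Y] :
    ∃ Φ : {k : X → Y // ∀ (h : H) (x : X), k (φ h • x) = φ h • k x} →
        {m : (G ⧸ φ.range) × X → Y //
          ∀ (g : G) (c : G ⧸ φ.range) (x : X), m (g • c, g • x) = g • m (c, x)},
      Function.Bijective Φ ∧
      (∀ (k : {k : X → Y // ∀ (h : H) (x : X), k (φ h • x) = φ h • k x})
          (g : G) (x : X),
        (Φ k).1 (QuotientGroup.mk g, x) = g • k.1 (g⁻¹ • x)) ∧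
      (∀ (k : {k : X → Y // ∀ (h : H) (x : X), k (φ h • x) = φ h • k x})
          (m : {m : (G ⧸ φ.range) × X → Y //
            ∀ (g : G) (c : G ⧸ φ.range) (x : X), m (g • c, g • x) = g • m (c, x)}),
        Φ k = m ↔ k.1 = fun x => m.1 (QuotientGroup.mk (1 : G), x)) := by
  refine ⟨fun k => ⟨transposeFun φ k, transposeFun_equivariant φ k⟩, ⟨?_, ?_⟩,
    fun k g x => rfl, ?_⟩
  · -- injective
    intro k k' hkk'
    have h := congrArg Subtype.val hkk'
    ext x
    have := congrFun h (QuotientGroup.mk (1 : G), x)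
    simpa [transposeFun_mk] using this
  · -- surjective
    intro m
    have hk : ∀ (h : H) (x : X),
        m.1 (QuotientGroup.mk (1 : G), φ h • x) = φ h • m.1 (QuotientGroup.mk (1 : G), x) := by
      intro h x
      have h1 : (φ h) • (QuotientGroup.mk (1 : G) : G ⧸ φ.range) = QuotientGroup.mk (1 : G) := by
        show QuotientGroup.mk (φ h * 1) = _
        rw [mul_one]
        exact QuotientGroup.eq.mpr (by simpa using ⟨h⁻¹, by simp⟩)
      rw [← m.2 (φ h) (QuotientGroup.mk 1) x, h1]
    refine ⟨⟨fun x => m.1 (QuotientGroup.mk (1 : G), x), hk⟩, ?_⟩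
    ext ⟨c, x⟩
    induction c using QuotientGroup.induction_on with
    | H a =>
      show transposeFun φ ⟨fun x => m.1 (QuotientGroup.mk (1 : G), x), hk⟩
        (QuotientGroup.mk a, x) = m.1 (QuotientGroup.mk a, x)
      rw [transposeFun_mk]
      have := m.2 a (QuotientGroup.mk (1 : G)) (a⁻¹ • x)
      simp only [smul_inv_smul] at this
      rw [← this]
      simp
  · -- characterization of inverse
    intro k m
    constructor
    · intro h
      subst h
      ext x
      show k.1 x = transposeFun φ k (QuotientGroup.mk (1 : G), x)
      simp [transposeFun_mk]
    · intro h
      ext ⟨c, x⟩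
      induction c using QuotientGroup.induction_on with
      | H a =>
        show transposeFun φ k (QuotientGroup.mk a, x) = m.1 (QuotientGroup.mk a, x)
        rw [transposeFun_mk, congrFun h (a⁻¹ • x)]
        have := m.2 a (QuotientGroup.mk (1 : G)) (a⁻¹ • x)
        simp only [smul_inv_smul] at this
        rw [← this]
        simp
end

section
/- Let G be a group equipped with a measurable-space structure making multiplication measurable, and suppose G acts measurably on measurable spaces X and Y (the maps (g, x) ↦ g • x and (g, y) ↦ g • y are measurable in each variable as needed). Let γ be a Markov kernel from X to G that is G-equivariant in the sense that for all g ∈ G and x ∈ X, γ(g • x) equals the pushforward of γ(x) under g' ↦ g * g'. Let κ be any Markov kernel from X to Y. Define S : X → Measure Y by S(x) := (γ(x)).bind (fun g => pushforward of κ(g⁻¹ • x) under y ↦ g • y). Then S is a G-equivariant Markov kernel: for all g₀ ∈ G and x ∈ X, S(g₀ • x) equals the pushforward of S(x) under y ↦ g₀ • y. -/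
open MeasureTheory

/-- Stochastic symmetrisation along the trivial homomorphism `I → G`: if `γ` is a
`G`-equivariant Markov kernel from `X` to `G` and `κ` is an arbitrary Markov kernel
from `X` to `Y`, then the symmetrised kernel
`S x := (γ x).bind (fun g => ((κ (g⁻¹ • x)).map (g • ·)))` is `G`-equivariant. -/
theorem symmetrised_kernel_equivariant
    {G X Y : Type*} [Group G] [MeasurableSpace G] [MeasurableMul₂ G]
    [MeasurableSpace X] [MeasurableSpace Y]
    [MulAction G X] [MulAction G Y]
    [MeasurableSMul G X] [MeasurableSMul G Y]
    (γ : ProbabilityTheory.Kernel X G) [ProbabilityTheory.IsMarkovKernel γ]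
    (hγ : ∀ (g : G) (x : X), γ (g • x) = (γ x).map (fun g' : G => g * g'))
    (κ : ProbabilityTheory.Kernel X Y) [ProbabilityTheory.IsMarkovKernel κ] :
    ∀ (g₀ : G) (x : X),
      (γ (g₀ • x)).bind
          (fun g : G => (κ (g⁻¹ • (g₀ • x))).map (fun y : Y => g • y)) =
        ((γ x).bind
            (fun g : G => (κ (g⁻¹ • x)).map (fun y : Y => g • y))).map
          (fun y : Y => g₀ • y) := by
  intro g₀ x
  set μ : Measure G := γ x with hμ
  set f : G → Measure Y := fun g : G => (κ (g⁻¹ • x)).map (fun y : Y => g • y) with hf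
  set f₁ : G → Measure Y :=
    fun g : G => (κ (g⁻¹ • (g₀ • x))).map (fun y : Y => g • y) with hf₁
  -- the pushforward map on measures along `g₀ • ·`
  set m : Measure Y → Measure Y := fun ν => ν.map (fun y : Y => g₀ • y) with hm
  have hsmul : ∀ g : G, Measurable (fun y : Y => g • y) := fun g => measurable_const_smul g
  have hmmeas : Measurable m := Measure.measurable_map _ (hsmul g₀)
  have hminv : ∀ ν : Measure Y, (m ν).map (fun y : Y => g₀⁻¹ • y) = ν := by
    intro ν
    rw [hm, Measure.map_map (hsmul g₀⁻¹) (hsmul g₀)]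
    simp [Function.comp_def]
  -- key pointwise identity
  have hkey : ∀ g : G, f₁ (g₀ * g) = m (f g) := by
    intro g
    simp only [hf₁, hf, hm]
    rw [Measure.map_map (hsmul g₀) (hsmul g)]
    have h1 : (g₀ * g)⁻¹ • (g₀ • x) = g⁻¹ • x := by
      rw [mul_inv_rev, mul_smul, inv_smul_smul]
    have h2 : (fun y : Y => (g₀ * g) • y) = (fun y : Y => g₀ • y) ∘ (fun y : Y => g • y) := by
      funext y; simp [mul_smul]
    rw [h1, h2]
  have hcomp : f₁ ∘ (fun g : G => g₀ * g) = m ∘ f := funext fun g => hkey g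
  have hγ' : γ (g₀ • x) = μ.map (fun g : G => g₀ * g) := hγ g₀ x
  have hemb : MeasurableEmbedding (fun g : G => g₀ * g) := measurableEmbedding_mulLeft g₀
  show Measure.join (Measure.map f₁ (γ (g₀ • x))) =
    Measure.map (fun y : Y => g₀ • y) (Measure.join (Measure.map f μ))
  rw [hγ']
  by_cases hA : AEMeasurable f μ
  · have hmf : AEMeasurable (m ∘ f) μ := hmmeas.comp_aemeasurable hA
    have hf₁ae : AEMeasurable f₁ (μ.map (fun g : G => g₀ * g)) := by
      rw [hemb.aemeasurable_map_iff, hcomp]; exact hmf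
    rw [AEMeasurable.map_map_of_aemeasurable hf₁ae (measurable_const_mul g₀).aemeasurable,
      hcomp, ← AEMeasurable.map_map_of_aemeasurable (hmmeas.aemeasurable) hA,
      Measure.join_map_map (hsmul g₀)]
  · have hA1 : ¬ AEMeasurable f₁ (μ.map (fun g : G => g₀ * g)) := by
      intro h
      rw [hemb.aemeasurable_map_iff, hcomp] at h
      apply hA
      have : f = (fun ν : Measure Y => ν.map (fun y : Y => g₀⁻¹ • y)) ∘ (m ∘ f) := by
        funext g; simp [Function.comp_def, hminv (f g)]
      rw [this]
      exact (Measure.measurable_map _ (hsmul g₀⁻¹)).comp_aemeasurable h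
    rw [Measure.map_of_not_aemeasurable hA, Measure.map_of_not_aemeasurable hA1]
    simp
end

section
/- Let X be a topological space whose open sets are measurable, let G be a measurable space, let α be a Markov kernel from G × X to X, and let ι be a Markov kernel from G to G. Suppose the following composite identity holds: for every g ∈ G, x ∈ X, and measurable A ⊆ X, ∫ (∫ α(g', x')(A) dι(g)(g')) dα(g, x)(x') = 1 if x ∈ A and = 0 otherwise. Then for every open U ⊆ X that is invariant (i.e., α(g, x)(U) = 1 for all x ∈ U and g ∈ G), one has α(g, x)(U) = 1 if x ∈ U and α(g, x)(U) = 0 if x ∉ U, for all g ∈ G and x ∈ X. -/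
open MeasureTheory
open scoped Classical

/- For `x ∉ U`, the composite identity gives `0 = ∫⁻ x', (∫⁻ g', α (g', x') U ∂ι g) ∂α (g, x)`.
By invariance the inner integral equals `1` on `U`, so the right-hand side dominates
`α (g, x) U`, which therefore vanishes. -/

theorem MeasureTheory.measure_le_lintegral_of_one_le_on {X : Type*} [MeasurableSpace X]
    {μ : Measure X} {f : X → ENNReal} {s : Set X} (hs : MeasurableSet s)
    (hf : ∀ x ∈ s, 1 ≤ f x) : μ s ≤ ∫⁻ x, f x ∂μ :=
  calc μ s = ∫⁻ _ in s, 1 ∂μ := (setLIntegral_one s).symm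
    _ ≤ ∫⁻ x in s, f x ∂μ := setLIntegral_mono' hs hf
    _ ≤ ∫⁻ x, f x ∂μ := setLIntegral_le_lintegral s f

theorem kernel_action_indicator_on_invariant_opens_general
    {X G : Type*} [TopologicalSpace X] [MeasurableSpace X]
    [OpensMeasurableSpace X] [MeasurableSpace G]
    (α : ProbabilityTheory.Kernel (G × X) X)
    (ι : ProbabilityTheory.Kernel G G) [ProbabilityTheory.IsMarkovKernel ι]
    (hcomp : ∀ (g : G) (x : X) (A : Set X), MeasurableSet A →
      (∫⁻ x', (∫⁻ g', α (g', x') A ∂(ι g)) ∂(α (g, x))) =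
        if x ∈ A then 1 else 0) :
    ∀ U : Set X, IsOpen U → (∀ (g : G), ∀ x ∈ U, α (g, x) U = 1) →
      ∀ (g : G) (x : X), α (g, x) U = if x ∈ U then 1 else 0 := by
  intro U hU hinv g x
  split_ifs with hx
  · exact hinv g x hx
  have hinner : ∀ x' ∈ U, 1 ≤ ∫⁻ g', α (g', x') U ∂(ι g) := fun x' hx' => by
    simp [hinv _ x' hx']
  have hle := measure_le_lintegral_of_one_le_on (μ := α (g, x)) hU.measurableSet hinner
  rw [hcomp g x U hU.measurableSet, if_neg hx] at hle
  exact nonpos_iff_eq_zero.mp hle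

/-- If acting by `g` and then by the "inverse" kernel `ι` is the identity kernel,
then on every invariant open set the action kernel `α` acts as the indicator
function: `α (g, x) U = 1` if `x ∈ U` and `= 0` if `x ∉ U`. -/
theorem kernel_action_indicator_on_invariant_opens
    {X G : Type*} [TopologicalSpace X] [MeasurableSpace X]
    [OpensMeasurableSpace X] [MeasurableSpace G]
    (α : ProbabilityTheory.Kernel (G × X) X)
    [ProbabilityTheory.IsMarkovKernel α]
    (ι : ProbabilityTheory.Kernel G G) [ProbabilityTheory.IsMarkovKernel ι]
    (hcomp : ∀ (g : G) (x : X) (A : Set X), MeasurableSet A →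
      (∫⁻ x', (∫⁻ g', α (g', x') A ∂(ι g)) ∂(α (g, x))) =
        if x ∈ A then 1 else 0) :
    ∀ U : Set X, IsOpen U → (∀ (g : G), ∀ x ∈ U, α (g, x) U = 1) →
      ∀ (g : G) (x : X), α (g, x) U = if x ∈ U then 1 else 0 :=
  kernel_action_indicator_on_invariant_opens_general α ι hcomp
end

section
/- Let X be a topological space whose open sets are measurable, let G be a measurable space, and let α be a Markov kernel from G × X to X that is zero-one (for every g, x and measurable A, α(g, x)(A) ∈ {0, 1}) and such that for every open U ⊆ X and every g ∈ G the function x ↦ α(g, x)(U) is lower semicontinuous. For an open set U ⊆ X define G·U := {x ∈ X | ∃ g ∈ G, α(g, x)(U) = 1}. Then: (i) G·U is open; and (ii) if moreover there is a probability measure ε on G such that for every x ∈ X and measurable A, ∫ α(g, x)(A) dε(g) = 1 when x ∈ A and = 0 when x ∉ A, then U ⊆ G·U. -/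
open MeasureTheory
open scoped Classical

/-- For a zero-one (deterministic) kernel action `α` whose evaluations on open sets
are lower semicontinuous, the saturation `G·U := {x | ∃ g, α (g, x) U = 1}` of an
open set `U` is open; and if there is a "unit" probability measure `ε` on `G`
satisfying the unit law of the action, then `U ⊆ G·U`. -/
theorem saturation_open_and_contains
    {X G : Type*} [TopologicalSpace X] [MeasurableSpace X]
    [OpensMeasurableSpace X] [MeasurableSpace G]
    (α : ProbabilityTheory.Kernel (G × X) X)
    [ProbabilityTheory.IsMarkovKernel α]
    (hzo : ∀ (g : G) (x : X) (A : Set X), MeasurableSet A →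
      α (g, x) A = 0 ∨ α (g, x) A = 1)
    (hlsc : ∀ (U : Set X), IsOpen U → ∀ g : G,
      LowerSemicontinuous (fun x : X => α (g, x) U))
    (U : Set X) (hU : IsOpen U) :
    IsOpen {x : X | ∃ g : G, α (g, x) U = 1} ∧
    (∀ ε : Measure G, IsProbabilityMeasure ε →
      (∀ (x : X) (A : Set X), MeasurableSet A →
        (∫⁻ g, α (g, x) A ∂ε) = if x ∈ A then 1 else 0) →
      U ⊆ {x : X | ∃ g : G, α (g, x) U = 1}) := by
  have hkey : ∀ g x, α (g, x) U = 1 ↔ 0 < α (g, x) U := by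
    intro g x
    rcases hzo g x U hU.measurableSet with h | h
    · simp [h]
    · simp [h]
  constructor
  · have : {x : X | ∃ g : G, α (g, x) U = 1} =
        ⋃ g : G, {x : X | 0 < α (g, x) U} := by
      ext x; simp only [Set.mem_setOf_eq, Set.mem_iUnion, hkey]
    rw [this]
    exact isOpen_iUnion fun g => (hlsc U hU g).isOpen_preimage 0
  · intro ε hε hunit x hx
    by_contra h
    simp only [Set.mem_setOf_eq] at h
    push_neg at h
    have hzero : ∀ g, α (g, x) U = 0 := by
      intro g
      rcases hzo g x U hU.measurableSet with h0 | h1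
      · exact h0
      · exact absurd h1 (h g)
    have := hunit x U hU.measurableSet
    simp only [hzero, if_pos hx, lintegral_zero] at this
    exact zero_ne_one this
end
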